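/- Let L ⊆ ℤⁿ be a zonotopal lattice, let (·,·) be a weighted inner product on ℝⁿ, let F = span_ℝ(L), and let F^⊥ be the orthogonal complement of F with respect to (·,·). Let x ∈ ℝⁿ and let α₁,…,αₙ ≥ 0 be reals, and set P = x + ∏ᵢ [−αᵢ, αᵢ]. If P ∩ F^⊥ = ∅, then there exists an elementary vector y ∈ L such that (y, z) > 0 for all z ∈ P. -/

import Mathlib

/-- The support of an integer vector: the set of its nonzero coordinates. -/
def supp {n : ℕ} (v : Fin n → ℤ) : Set (Fin n) := {i | v i ≠ 0}

/-- `v` is an elementary vector of the lattice `L ⊆ ℤⁿ`: it is a nonzero lattice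
vector with entries in `{-1,0,+1}` whose support is minimal among supports of
nonzero lattice vectors. -/
def IsElementary {n : ℕ} (L : AddSubgroup (Fin n → ℤ)) (v : Fin n → ℤ) : Prop :=
  v ∈ L ∧ v ≠ 0 ∧ (∀ i, v i = -1 ∨ v i = 0 ∨ v i = 1) ∧
    ∀ u ∈ L, u ≠ 0 → ¬ (supp u ⊂ supp v)

/-- A lattice `L ⊆ ℤⁿ` is zonotopal if every nonzero lattice vector's support
contains the support of some elementary vector. -/
def IsZonotopal {n : ℕ} (L : AddSubgroup (Fin n → ℤ)) : Prop :=
  ∀ v ∈ L, v ≠ 0 → ∃ u, IsElementary L u ∧ supp u ⊆ supp v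

/-- The weighted inner product on `ℝⁿ` with weights `lam`. -/
def wip {n : ℕ} (lam : Fin n → ℝ) (x y : Fin n → ℝ) : ℝ := ∑ i, lam i * x i * y i

/-- Coordinatewise cast of an integer vector to a real vector. -/
def icast {n : ℕ} (v : Fin n → ℤ) : Fin n → ℝ := fun i => (v i : ℝ)

/-- The real span `F` of a lattice `L ⊆ ℤⁿ`. -/
def latticeSpan {n : ℕ} (L : AddSubgroup (Fin n → ℤ)) : Submodule ℝ (Fin n → ℝ) :=
  Submodule.span ℝ (icast '' (L : Set (Fin n → ℤ)))

/-- The Dirichlet-Voronoi polytope of a lattice `L ⊆ ℤⁿ` with respect to the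
weighted inner product with weights `lam`. -/
def DV {n : ℕ} (L : AddSubgroup (Fin n → ℤ)) (lam : Fin n → ℝ) : Set (Fin n → ℝ) :=
  {x | x ∈ latticeSpan L ∧
    ∀ v ∈ L, wip lam x (icast v) ≤ wip lam (icast v) (icast v) / 2}

/-- `v` is a strict Voronoi vector of `L` with respect to the weighted inner
product with weights `lam`: `±v` are the unique shortest vectors of `v + 2L`. -/
def IsStrictVoronoi {n : ℕ} (L : AddSubgroup (Fin n → ℤ)) (lam : Fin n → ℝ)
    (v : Fin n → ℤ) : Prop :=
  v ∈ L ∧ v ≠ 0 ∧ ∀ w ∈ L, v + 2 • w ≠ v → v + 2 • w ≠ -v →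
    wip lam (icast v) (icast v) <
      wip lam (icast (v + 2 • w)) (icast (v + 2 • w))

/-- Two integer vectors are conformal if their entries never have opposite signs. -/
def IsConformal {n : ℕ} (v w : Fin n → ℤ) : Prop := ∀ i, 0 ≤ v i * w i

/-- The sign of a real number, as an integer in `{-1,0,+1}`. -/
noncomputable def sgnR (t : ℝ) : ℤ := if 0 < t then 1 else if t < 0 then -1 else 0

/-- A covector of the vector configuration `X`: the sign vector of the values of a
linear functional on the configuration. -/
def IsCovector {n d : ℕ} (X : Fin n → Fin d → ℝ) (s : Fin n → ℤ) : Prop :=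
  ∃ f : (Fin d → ℝ) →ₗ[ℝ] ℝ, ∀ i, s i = sgnR (f (X i))

/-- A cocircuit of the vector configuration `X`: a nonzero covector of minimal support. -/
def IsCocircuit {n d : ℕ} (X : Fin n → Fin d → ℝ) (s : Fin n → ℤ) : Prop :=
  IsCovector X s ∧ s ≠ 0 ∧ ∀ t, IsCovector X t → t ≠ 0 → ¬ (supp t ⊂ supp s)

/-- The lattice in `ℤⁿ` generated by the cocircuits of `X`. -/
def cocircuitLattice {n d : ℕ} (X : Fin n → Fin d → ℝ) : AddSubgroup (Fin n → ℤ) :=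
  AddSubgroup.closure {s | IsCocircuit X s}

/-- A linear subspace of `ℝ^d` spanned by a subset of the configuration `X`. -/
def SpannedSubspace {n d : ℕ} (X : Fin n → Fin d → ℝ)
    (W : Submodule ℝ (Fin d → ℝ)) : Prop :=
  ∃ S : Set (Fin n), W = Submodule.span ℝ (X '' S)

/-- McMullen's condition (II): every `(d-2)`-dimensional subspace spanned by vectors
of `X` is contained in exactly `2` or `3` hyperplanes spanned by vectors of `X`. -/
def ConditionII {n d : ℕ} (X : Fin n → Fin d → ℝ) : Prop :=
  ∀ W : Submodule ℝ (Fin d → ℝ), SpannedSubspace X W → Module.finrank ℝ W = d - 2 →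
    {H : Submodule ℝ (Fin d → ℝ) |
        SpannedSubspace X H ∧ Module.finrank ℝ H = d - 1 ∧ W ≤ H}.ncard = 2 ∨
    {H : Submodule ℝ (Fin d → ℝ) |
        SpannedSubspace X H ∧ Module.finrank ℝ H = d - 1 ∧ W ≤ H}.ncard = 3

/-- The zonotope generated by the vector configuration `X`, i.e. the Minkowski sum
of the segments `conv{xᵢ, -xᵢ}`. -/
def zonotope {n d : ℕ} (X : Fin n → Fin d → ℝ) : Set (Fin d → ℝ) :=
  {z | ∃ c : Fin n → ℝ, (∀ i, |c i| ≤ 1) ∧ z = ∑ i, c i • X i}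

/-- `P` tiles `ℝ^d` face-to-face by translations: some family of translates of `P`
covers `ℝ^d`, and any two distinct translates intersect in a common (possibly empty)
exposed face. -/
def TilesFaceToFace {d : ℕ} (P : Set (Fin d → ℝ)) : Prop :=
  ∃ T : Set (Fin d → ℝ),
    (∀ x, ∃ t ∈ T, x ∈ (t + ·) '' P) ∧
    ∀ s ∈ T, ∀ t ∈ T, s ≠ t →
      IsExposed ℝ ((s + ·) '' P) (((s + ·) '' P) ∩ ((t + ·) '' P)) ∧
      IsExposed ℝ ((t + ·) '' P) (((s + ·) '' P) ∩ ((t + ·) '' P))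

/-!
Separating the compact convex box `P` from the subspace `F^⊥` (Hahn–Banach, after rescaling
coordinates by `√λᵢ` to reach the Euclidean inner product) gives `y ∈ F` with
`min_{z ∈ P} (y, z) > 0`. This minimum is an explicit continuous, positively homogeneous
function of `y`, so `y` can be moved to a lattice vector `w ∈ L`. The minimum is additive on
conformal vectors, and in a zonotopal lattice `w` splits off an elementary vector conformal
to it, so descending on `∑ |wᵢ|` some elementary vector has positive minimum on `P`.
-/

open scoped InnerProductSpace
open Filter Topology

section InnerProductSpace

variable {E : Type*} [NormedAddCommGroup E] [InnerProductSpace ℝ E]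

lemma LinearMap.eq_zero_of_forall_mem_lt {W : Submodule ℝ E} (f : E →ₗ[ℝ] ℝ) {c : ℝ}
    (h : ∀ a ∈ W, f a < c) {a : E} (ha : a ∈ W) : f a = 0 := by
  by_contra hne
  have := h ((c / f a) • a) (W.smul_mem _ ha)
  rw [map_smul, smul_eq_mul, div_mul_cancel₀ _ hne] at this
  exact lt_irrefl c this

/-- The Hahn–Banach functional separating `C` from `Vᗮ` vanishes on `Vᗮ`, so its Riesz vector
lies in `Vᗮᗮ = V`. -/
lemma exists_mem_forall_inner_pos_of_disjoint_orthogonal [CompleteSpace E]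
    (V : Submodule ℝ E) [V.HasOrthogonalProjection] {C : Set E} (hconv : Convex ℝ C)
    (hcomp : IsCompact C) (hdisj : Disjoint C Vᗮ) : ∃ y ∈ V, ∀ z ∈ C, 0 < ⟪y, z⟫_ℝ := by
  obtain ⟨f, c, d, hf, hcd, hfd⟩ := geometric_hahn_banach_closed_compact Vᗮ.convex
    V.isClosed_orthogonal hconv hcomp hdisj.symm
  have hf0 : ∀ a ∈ Vᗮ, f a = 0 := fun a ha =>
    LinearMap.eq_zero_of_forall_mem_lt f.toLinearMap hf ha
  have hc : 0 < c := by simpa using hf 0 Vᗮ.zero_mem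
  refine ⟨(InnerProductSpace.toDual ℝ E).symm f, ?_, fun z hz => ?_⟩
  · rw [← V.orthogonal_orthogonal, Submodule.mem_orthogonal]
    intro a ha
    rw [real_inner_comm, InnerProductSpace.toDual_symm_apply]
    exact hf0 a ha
  · rw [InnerProductSpace.toDual_symm_apply]
    linarith [hfd z hz, hcd]

end InnerProductSpace

section WeightedInnerProduct

variable {n : ℕ}

noncomputable def weightedEmbedding (lam : Fin n → ℝ) :
    (Fin n → ℝ) →ₗ[ℝ] EuclideanSpace ℝ (Fin n) :=
  (WithLp.linearEquiv 2 ℝ (Fin n → ℝ)).symm.toLinearMap ∘ₗ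
    (Matrix.diagonal fun i => √(lam i)).mulVecLin

@[simp]
lemma weightedEmbedding_apply (lam y : Fin n → ℝ) (i : Fin n) :
    weightedEmbedding lam y i = √(lam i) * y i := by
  simp [weightedEmbedding, Matrix.mulVec_diagonal]

lemma inner_weightedEmbedding {lam : Fin n → ℝ} (hlam : ∀ i, 0 ≤ lam i) (y z : Fin n → ℝ) :
    ⟪weightedEmbedding lam y, weightedEmbedding lam z⟫_ℝ = wip lam y z := by
  simp only [PiLp.inner_apply, weightedEmbedding_apply, RCLike.inner_apply, conj_trivial, wip]
  refine Finset.sum_congr rfl fun i _ => ?_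
  linear_combination (y i * z i) * Real.mul_self_sqrt (hlam i)

lemma exists_mem_forall_wip_pos (F : Submodule ℝ (Fin n → ℝ)) {lam : Fin n → ℝ}
    (hlam : ∀ i, 0 ≤ lam i) {C : Set (Fin n → ℝ)} (hconv : Convex ℝ C) (hcomp : IsCompact C)
    (hdisj : C ∩ {y | ∀ w ∈ F, wip lam y w = 0} = ∅) : ∃ y ∈ F, ∀ z ∈ C, 0 < wip lam y z := by
  set e := weightedEmbedding lam
  have he : Continuous e := LinearMap.continuous_of_finiteDimensional e
  have hdisj' : Disjoint (e '' C) (F.map e)ᗮ := by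
    refine Set.disjoint_left.2 ?_
    rintro _ ⟨z, hz, rfl⟩ hzV
    refine (Set.eq_empty_iff_forall_notMem.1 hdisj) z ⟨hz, fun w hw => ?_⟩
    rw [← inner_weightedEmbedding hlam]
    exact (Submodule.mem_orthogonal' _ _).1 hzV _ (Submodule.mem_map_of_mem hw)
  obtain ⟨_, ⟨y, hyF, rfl⟩, hy⟩ := exists_mem_forall_inner_pos_of_disjoint_orthogonal (F.map e)
    (hconv.linear_image e) (hcomp.image he) hdisj'
  refine ⟨y, hyF, fun z hz => ?_⟩
  rw [← inner_weightedEmbedding hlam]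
  exact hy _ (Set.mem_image_of_mem e hz)

end WeightedInnerProduct

lemma abs_add_of_mul_nonneg {R : Type*} [Ring R] [LinearOrder R] [IsStrictOrderedRing R]
    {a b : R} (h : 0 ≤ a * b) : |a + b| = |a| + |b| :=
  (abs_add_eq_add_abs_iff a b).2 (mul_nonneg_iff.1 h)

lemma Int.natAbs_add_of_mul_nonneg {a b : ℤ} (h : 0 ≤ a * b) :
    (a + b).natAbs = a.natAbs + b.natAbs := by
  rcases Int.mul_nonneg_iff.1 h with ⟨ha, hb⟩ | ⟨ha, hb⟩ <;> omega

section BoxMinimum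

variable {n : ℕ}

lemma box_eq_pi (x α : Fin n → ℝ) :
    {z : Fin n → ℝ | ∀ i, |z i - x i| ≤ α i} =
      Set.univ.pi fun i => Set.Icc (x i - α i) (x i + α i) := by
  ext z
  simp only [Set.mem_ofPred_eq, Set.mem_univ_pi, Set.mem_Icc, abs_le]
  exact forall_congr' fun i => by constructor <;> rintro ⟨h₁, h₂⟩ <;> constructor <;> linarith

/-- The minimum of `wip lam y` over the box `{z | ∀ i, |z i - x i| ≤ α i}`. -/
def boxMin (lam x α y : Fin n → ℝ) : ℝ := ∑ i, lam i * (y i * x i - α i * |y i|)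

variable {lam x α : Fin n → ℝ}

lemma boxMin_le_wip (hlam : ∀ i, 0 ≤ lam i) (y : Fin n → ℝ) {z : Fin n → ℝ}
    (hz : ∀ i, |z i - x i| ≤ α i) : boxMin lam x α y ≤ wip lam y z := by
  refine Finset.sum_le_sum fun i _ => ?_
  have h : y i * x i - α i * |y i| ≤ y i * z i := by
    have := neg_abs_le (y i * (z i - x i))
    rw [abs_mul] at this
    nlinarith [mul_le_mul_of_nonneg_left (hz i) (abs_nonneg (y i))]
  simpa only [mul_assoc] using mul_le_mul_of_nonneg_left h (hlam i)

lemma exists_wip_eq_boxMin (hα : ∀ i, 0 ≤ α i) (y : Fin n → ℝ) :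
    ∃ z : Fin n → ℝ, (∀ i, |z i - x i| ≤ α i) ∧ wip lam y z = boxMin lam x α y := by
  refine ⟨fun i => x i - SignType.sign (y i) * α i, fun i => ?_, ?_⟩
  · rcases lt_trichotomy (y i) 0 with h | h | h <;> simp [h, abs_of_nonneg (hα i), hα i]
  · refine Finset.sum_congr rfl fun i _ => ?_
    rw [← sign_mul_self (y i)]
    ring

lemma boxMin_smul_of_nonneg {t : ℝ} (ht : 0 ≤ t) (y : Fin n → ℝ) :
    boxMin lam x α (t • y) = t * boxMin lam x α y := by
  simp only [boxMin, Finset.mul_sum, Pi.smul_apply, smul_eq_mul, abs_mul, abs_of_nonneg ht]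
  exact Finset.sum_congr rfl fun i _ => by ring

lemma continuous_boxMin : Continuous (boxMin lam x α) := by
  unfold boxMin
  fun_prop

lemma boxMin_add_of_forall_mul_nonneg {y y' : Fin n → ℝ} (h : ∀ i, 0 ≤ y i * y' i) :
    boxMin lam x α (y + y') = boxMin lam x α y + boxMin lam x α y' := by
  simp only [boxMin, ← Finset.sum_add_distrib, Pi.add_apply, abs_add_of_mul_nonneg (h _)]
  exact Finset.sum_congr rfl fun i _ => by ring

end BoxMinimum

lemma tendsto_intFloor_mul_div (c : ℝ) :
    Tendsto (fun N : ℕ => (⌊N * c⌋ : ℝ) / N) atTop (𝓝 c) := by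
  have hlow : Tendsto (fun N : ℕ => c - 1 / (N : ℝ)) atTop (𝓝 c) := by
    simpa using (tendsto_const_nhds (x := c)).sub tendsto_one_div_atTop_nhds_zero_nat
  refine tendsto_of_tendsto_of_tendsto_of_le_of_le' hlow tendsto_const_nhds ?_ ?_ <;>
    filter_upwards [eventually_gt_atTop 0] with N hN
  · rw [le_div_iff₀ (Nat.cast_pos.2 hN), sub_mul, one_div_mul_cancel (Nat.cast_pos.2 hN).ne',
      mul_comm]
    linarith [Int.lt_floor_add_one ((N : ℝ) * c)]
  · rw [div_le_iff₀ (Nat.cast_pos.2 hN), mul_comm]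
    exact Int.floor_le _

lemma icast_add {n : ℕ} (v w : Fin n → ℤ) : icast (v + w) = icast v + icast w := by
  ext i
  simp [icast]

lemma icast_sum_zsmul {n k : ℕ} (a : Fin k → ℤ) (v : Fin k → Fin n → ℤ) :
    icast (∑ j, a j • v j) = ∑ j, (a j : ℝ) • icast (v j) := by
  ext i
  simp [icast]

/-- Round the coefficients of a point of the cone to the grid `ℤ / N` and clear denominators. -/
lemma exists_mem_icast_mem_of_isOpen {n : ℕ} {L : AddSubgroup (Fin n → ℤ)}
    {U : Set (Fin n → ℝ)} (hU : IsOpen U) (hcone : ∀ t : ℝ, 0 < t → ∀ y ∈ U, t • y ∈ U)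
    {y : Fin n → ℝ} (hyL : y ∈ latticeSpan L) (hyU : y ∈ U) : ∃ w ∈ L, icast w ∈ U := by
  obtain ⟨k, c, g, rfl⟩ := Submodule.mem_span_set'.1 hyL
  choose v hvL hv using fun j => (g j).2
  set Φ : (Fin k → ℝ) → Fin n → ℝ := fun a => ∑ j, a j • icast (v j)
  have hΦ : Continuous Φ := by fun_prop
  have hΦc : Φ c ∈ U := by simpa [Φ, hv] using hyU
  have hlim : Tendsto (fun N : ℕ => Φ fun j => (⌊N * c j⌋ : ℝ) / N) atTop (𝓝 (Φ c)) :=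
    hΦ.continuousAt.tendsto.comp (tendsto_pi_nhds.2 fun j => tendsto_intFloor_mul_div (c j))
  obtain ⟨N, hNU, hN⟩ := ((hlim.eventually (hU.mem_nhds hΦc)).and (eventually_gt_atTop 0)).exists
  refine ⟨∑ j, ⌊N * c j⌋ • v j, sum_mem fun j _ => zsmul_mem (hvL j) _, ?_⟩
  have hN' : (0 : ℝ) < N := by exact_mod_cast hN
  convert hcone N hN' _ hNU using 1
  simp only [Φ, icast_sum_zsmul, Finset.smul_sum, smul_smul, mul_div_cancel₀ _ hN'.ne']

section Conformal

variable {n : ℕ} {L : AddSubgroup (Fin n → ℤ)}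

lemma supp_neg (v : Fin n → ℤ) : supp (-v) = supp v := by
  ext i
  simp [supp]

lemma IsElementary.neg {v : Fin n → ℤ} (h : IsElementary L v) : IsElementary L (-v) := by
  obtain ⟨hvL, hv0, hsign, hmin⟩ := h
  refine ⟨neg_mem hvL, neg_ne_zero.2 hv0, fun i => ?_, by rwa [supp_neg]⟩
  rcases hsign i with h | h | h <;> simp [h]

lemma IsConformal.trans_of_supp_subset {a b c : Fin n → ℤ} (hab : IsConformal a b)
    (hbc : IsConformal b c) (hsupp : supp a ⊆ supp b) : IsConformal a c := by
  intro i
  by_cases hb : b i = 0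
  · have ha : a i = 0 := by_contra fun ha => hsupp ha hb
    simp [ha]
  · have := mul_nonneg (hab i) (hbc i)
    have hb2 : 0 < b i * b i := mul_self_pos.2 hb
    nlinarith

/-- The multiple is the least `|w i|` over the coordinates where `u` and `w` agree in sign. -/
lemma exists_sub_smul_supp_ssubset {u w : Fin n → ℤ}
    (hu : ∀ i, u i = -1 ∨ u i = 0 ∨ u i = 1) (hsupp : supp u ⊆ supp w)
    {i₀ j : Fin n} (hi₀ : 0 < u i₀ * w i₀) (hj : u j * w j < 0) :
    ∃ t : ℤ, w - t • u ≠ 0 ∧ supp (w - t • u) ⊂ supp w ∧ IsConformal (w - t • u) w := by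
  obtain ⟨i₁, hi₁A, hmin⟩ := (Finset.univ.filter fun i => 0 < u i * w i).exists_min_image
    (fun i => |w i|) ⟨i₀, by simpa using hi₀⟩
  simp only [Finset.mem_filter, Finset.mem_univ, true_and] at hi₁A hmin
  set t := |w i₁|
  have ht : 0 ≤ t := abs_nonneg _
  have hz : ∀ i, (w - t • u) i * w i = w i * w i - t * (u i * w i) := fun i => by
    simp only [Pi.sub_apply, Pi.smul_apply, smul_eq_mul]; ring
  have hconf : IsConformal (w - t • u) w := fun i => by
    rw [hz]
    by_cases hi : 0 < u i * w i
    · have huw : u i * w i ≤ |w i| := by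
        rcases hu i with h | h | h <;> simp [h, neg_le_abs, le_abs_self]
      nlinarith [hmin i hi, abs_mul_abs_self (w i)]
    · nlinarith [mul_self_nonneg (w i)]
  have hsub : supp (w - t • u) ⊆ supp w := fun i hi hwi => by
    have hui : u i = 0 := by_contra fun h => hsupp h hwi
    simp [supp, hwi, hui] at hi
  refine ⟨t, fun h => ?_, (Set.ssubset_iff_of_subset hsub).2 ⟨i₁, ?_, ?_⟩, hconf⟩
  · have hwj : w j ≠ 0 := by rintro h; simp [h] at hj
    have := hz j
    rw [h, Pi.zero_apply, zero_mul] at this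
    nlinarith [mul_self_pos.2 hwj]
  · rintro h; simp [h] at hi₁A
  · simp only [supp, Set.mem_ofPred_eq, Pi.sub_apply, Pi.smul_apply, smul_eq_mul, not_not, t]
    rcases hu i₁ with h | h | h <;> rw [h] at hi₁A ⊢
    · rw [abs_of_neg (by linarith)]; ring
    · simp at hi₁A
    · rw [abs_of_pos (by linarith)]; ring

lemma IsZonotopal.exists_elementary_isConformal (hL : IsZonotopal L) {w : Fin n → ℤ}
    (hw : w ∈ L) (hw0 : w ≠ 0) :
    ∃ u, IsElementary L u ∧ supp u ⊆ supp w ∧ IsConformal u w := by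
  induction h : (supp w).ncard using Nat.strong_induction_on generalizing w with
  | _ k ih =>
  obtain ⟨u, hu, hsupp⟩ := hL w hw hw0
  by_cases hconf : IsConformal u w
  · exact ⟨u, hu, hsupp, hconf⟩
  by_cases hconf' : IsConformal (-u) w
  · exact ⟨-u, hu.neg, by rwa [supp_neg], hconf'⟩
  obtain ⟨j, hj⟩ : ∃ j, u j * w j < 0 := by simpa [IsConformal] using hconf
  obtain ⟨i₀, hi₀⟩ : ∃ i, 0 < u i * w i := by simpa [IsConformal] using hconf'
  obtain ⟨t, hz0, hzw, hzconf⟩ := exists_sub_smul_supp_ssubset hu.2.2.1 hsupp hi₀ hj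
  obtain ⟨u', hu', hsupp', hconf''⟩ :=
    ih _ (h ▸ Set.ncard_lt_ncard hzw) (sub_mem hw (zsmul_mem hu.1 t)) hz0 rfl
  exact ⟨u', hu', hsupp'.trans hzw.subset, hconf''.trans_of_supp_subset hzconf hsupp'⟩

lemma IsConformal.isConformal_sub {u w : Fin n → ℤ} (hu : ∀ i, u i = -1 ∨ u i = 0 ∨ u i = 1)
    (hsupp : supp u ⊆ supp w) (hconf : IsConformal u w) : IsConformal u (w - u) := by
  intro i
  have hwi : u i ≠ 0 → w i ≠ 0 := fun h => hsupp h
  have := hconf i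
  rcases hu i with h | h | h <;> simp only [h, Pi.sub_apply] at this hwi ⊢ <;> omega

end Conformal

/-- The minimum over a box is additive on conformal vectors, so it descends along a
conformal decomposition of `w` into elementary vectors. -/
lemma IsZonotopal.exists_elementary_boxMin_pos {n : ℕ} {L : AddSubgroup (Fin n → ℤ)}
    (hL : IsZonotopal L) {lam x α : Fin n → ℝ} {w : Fin n → ℤ} (hw : w ∈ L)
    (hpos : 0 < boxMin lam x α (icast w)) :
    ∃ u, IsElementary L u ∧ 0 < boxMin lam x α (icast u) := by
  induction h : ∑ i, (w i).natAbs using Nat.strong_induction_on generalizing w with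
  | _ k ih =>
  have hw0 : w ≠ 0 := by rintro rfl; simp [icast, boxMin] at hpos
  obtain ⟨u, hu, hsupp, hconf⟩ := hL.exists_elementary_isConformal hw hw0
  by_cases hupos : 0 < boxMin lam x α (icast u)
  · exact ⟨u, hu, hupos⟩
  have hconf' := hconf.isConformal_sub hu.2.2.1 hsupp
  have hw_eq : w = u + (w - u) := (add_sub_cancel u w).symm
  refine ih _ ?_ (sub_mem hw hu.1) ?_ rfl
  · have hu1 : 0 < ∑ i, (u i).natAbs := Nat.pos_of_ne_zero fun h0 =>
      hu.2.1 <| funext fun i =>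
        Int.natAbs_eq_zero.1 (Finset.sum_eq_zero_iff.1 h0 i (Finset.mem_univ _))
    have : ∑ i, (w i).natAbs = ∑ i, (u i).natAbs + ∑ i, ((w - u) i).natAbs := by
      rw [← Finset.sum_add_distrib]
      exact Finset.sum_congr rfl fun i _ => by
        rw [← Int.natAbs_add_of_mul_nonneg (hconf' i), Pi.sub_apply, add_sub_cancel]
    omega
  · have hsplit := boxMin_add_of_forall_mul_nonneg (lam := lam) (x := x) (α := α)
      (y := icast u) (y' := icast (w - u)) fun i => by simp only [icast]; exact_mod_cast hconf' i
    rw [← icast_add, ← hw_eq] at hsplit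
    linarith

/-- If a parallelotope `P = x + ∏ᵢ [-αᵢ, αᵢ]` misses `F^⊥` (the
orthogonal complement, for the weighted inner product, of the real span `F` of a
zonotopal lattice `L`), then some elementary vector of `L` is strictly positive on
all of `P`. -/
theorem farkas_elementary {n : ℕ} (L : AddSubgroup (Fin n → ℤ)) (hL : IsZonotopal L)
    (lam : Fin n → ℝ) (hlam : ∀ i, 0 < lam i)
    (x : Fin n → ℝ) (α : Fin n → ℝ) (hα : ∀ i, 0 ≤ α i)
    (P : Set (Fin n → ℝ)) (hP : P = {z | ∀ i, |z i - x i| ≤ α i})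
    (hdisj : P ∩ {y | ∀ w ∈ latticeSpan L, wip lam y w = 0} = ∅) :
    ∃ y : Fin n → ℤ, IsElementary L y ∧ ∀ z ∈ P, 0 < wip lam (icast y) z := by
  have hlam' : ∀ i, 0 ≤ lam i := fun i => (hlam i).le
  have hPpi := box_eq_pi x α
  subst hP
  obtain ⟨y, hyF, hy⟩ := exists_mem_forall_wip_pos (latticeSpan L) hlam'
    (hPpi ▸ convex_pi fun i _ => convex_Icc _ _) (hPpi ▸ isCompact_univ_pi fun i => isCompact_Icc)
    hdisj
  obtain ⟨z, hz, hyz⟩ := exists_wip_eq_boxMin (lam := lam) (x := x) hα y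
  obtain ⟨w, hwL, hw⟩ := exists_mem_icast_mem_of_isOpen (U := {y | 0 < boxMin lam x α y})
    (isOpen_lt continuous_const continuous_boxMin)
    (fun t ht y hy => by simpa [boxMin_smul_of_nonneg ht.le] using mul_pos ht hy) hyF
    (show 0 < boxMin lam x α y from hyz ▸ hy z hz)
  obtain ⟨u, hu, hupos⟩ := hL.exists_elementary_boxMin_pos hwL hw
  exact ⟨u, hu, fun z hz => hupos.trans_le (boxMin_le_wip hlam' _ hz)⟩
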